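/- arXiv:1203.4700 — 5 statements merged into one kernel-verified Lean document; each statement's English description precedes it below -/
import Mathlib

section
/- If f : [0,1] → X is continuous, the limit g(t) := lim_{k→∞} k·(f(t) − f(t−1/k)) exists uniformly in t ∈ (0,1], and additionally lim_{t↘0} g(t) =: g(0) exists, then f is continuously differentiable on [0,1] with derivative g. -/
/-!
Integrating the difference quotients `k • (f x - f (x - 1/k))` over `[s, t]`, `0 < s`, gives
`k • ∫_{t-1/k}^t f - k • ∫_{s-1/k}^s f`, which tends to `f t - f s`; uniform convergence lets us
pass to the limit under the integral, so `f t - f s = ∫_s^t g`. Uniform limits of the continuous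
quotients make `g` continuous on `(0, 1]`, and the hypothesis at `0` extends this to `[0, 1]`.
Hence `f - ∫_0^· g` is constant on `(0, 1]`, so on `[0, 1]` by continuity, and the fundamental
theorem of calculus gives `f' = g`.
-/

open Set Filter Topology MeasureTheory intervalIntegral

section

variable {E : Type*} [NormedAddCommGroup E] [NormedSpace ℝ E]
  {ι : Type*} {l : Filter ι} {c : ι → ℝ} {f g : ℝ → E} {a b s t h : ℝ}

theorem slope_sub_left (f : ℝ → E) (x h : ℝ) :
    slope f (x - h) x = h⁻¹ • (f x - f (x - h)) := by
  rw [slope_def_module, sub_sub_cancel]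

theorem ContinuousOn.hasDerivWithinAt_intervalIntegral [CompleteSpace E]
    (hf : ContinuousOn f (Icc a b)) (ht : t ∈ Icc a b) :
    HasDerivWithinAt (fun u => ∫ x in a..u, f x) (f t) (Icc a b) t :=
  have : Fact (t ∈ Icc a b) := ⟨ht⟩
  integral_hasDerivWithinAt_right
    (hf.mono (uIcc_subset_Icc (left_mem_Icc.2 (ht.1.trans ht.2)) ht)).intervalIntegrable
    (hf.stronglyMeasurableAtFilter_nhdsWithin measurableSet_Icc t) (hf t ht)

theorem integral_sub_comp_sub_right (hf : IntegrableOn f (Icc (s - h) t)) (hh : 0 ≤ h)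
    (hst : s ≤ t) :
    ∫ x in s..t, (f x - f (x - h)) = (∫ x in t - h..t, f x) - ∫ x in s - h..s, f x := by
  have hII {u v : ℝ} (hu : u ∈ Icc (s - h) t) (hv : v ∈ Icc (s - h) t) :
      IntervalIntegrable f volume u v :=
    (hf.mono_set (uIcc_subset_Icc hu hv)).intervalIntegrable
  have hs : s ∈ Icc (s - h) t := ⟨by linarith, hst⟩
  have hsh : s - h ∈ Icc (s - h) t := ⟨le_rfl, by linarith⟩
  have hth : t - h ∈ Icc (s - h) t := ⟨by linarith, by linarith⟩
  have ht : t ∈ Icc (s - h) t := ⟨by linarith, le_rfl⟩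
  have hshift : IntervalIntegrable (fun x => f (x - h)) volume s t := by
    simpa using (hII hsh hth).comp_sub_right h
  rw [integral_sub (hII hs ht) hshift, integral_comp_sub_right,
    integral_interval_sub_interval_comm' (hII hs ht) (hII hsh hth) (hII hs hsh)]

theorem tendsto_inv_smul_integral_left [CompleteSpace E] (hf : ContinuousOn f (Icc a t))
    (hat : a < t) (hc : Tendsto c l (𝓝[>] 0)) :
    Tendsto (fun i => (c i)⁻¹ • ∫ x in t - c i..t, f x) l (𝓝 (f t)) := by
  have hderiv := hasDerivWithinAt_iff_tendsto_slope.1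
    (hf.hasDerivWithinAt_intervalIntegral (right_mem_Icc.2 hat.le))
  have hsmall : ∀ᶠ i in l, c i ∈ Ioo 0 (t - a) := hc.eventually (Ioo_mem_nhdsGT (by linarith))
  have hleft : Tendsto (fun i => t - c i) l (𝓝[Icc a t \ {t}] t) := by
    refine tendsto_nhdsWithin_iff.2 ⟨?_, ?_⟩
    · simpa using tendsto_const_nhds.sub (tendsto_nhdsWithin_iff.1 hc).1
    · filter_upwards [hsmall] with i hi
      exact ⟨⟨by linarith [hi.2], by linarith [hi.1]⟩, by simp [hi.1.ne']⟩
  refine (hderiv.comp hleft).congr' ?_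
  filter_upwards [hsmall] with i hi
  have hII {u : ℝ} (hu : u ∈ Icc a t) : IntervalIntegrable f volume a u :=
    (hf.mono (uIcc_subset_Icc (left_mem_Icc.2 hat.le) hu)).intervalIntegrable
  rw [Function.comp_apply, slope_comm, slope_sub_left, integral_interval_sub_left
    (hII (right_mem_Icc.2 hat.le)) (hII ⟨by linarith [hi.2], by linarith [hi.1]⟩)]

theorem continuousOn_slope_sub_left (hf : ContinuousOn f (Icc a b)) (hh : 0 ≤ h)
    (hhs : h ≤ s - a) : ContinuousOn (fun x => slope f (x - h) x) (Icc s b) := by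
  simp only [slope_sub_left]
  refine continuousOn_const.smul ((hf.mono ?_).sub (hf.comp (by fun_prop) ?_))
  · exact Icc_subset_Icc_left (by linarith)
  · exact fun x hx => ⟨by linarith [hx.1], by linarith [hx.2]⟩

theorem eventually_continuousOn_slope_sub_left (hf : ContinuousOn f (Icc a b)) (has : a < s)
    (hc : Tendsto c l (𝓝[>] 0)) :
    ∀ᶠ i in l, ContinuousOn (fun x => slope f (x - c i) x) (Icc s b) :=
  (hc.eventually (Ioo_mem_nhdsGT (sub_pos.2 has))).mono fun _ hi =>
    continuousOn_slope_sub_left hf hi.1.le hi.2.le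

theorem sub_eq_integral_of_tendstoUniformlyOn_slope [CompleteSpace E] [l.NeBot]
    [l.IsCountablyGenerated] (hf : ContinuousOn f (Icc a t)) (has : a < s) (hst : s ≤ t)
    (hc : Tendsto c l (𝓝[>] 0))
    (hg : TendstoUniformlyOn (fun i x => slope f (x - c i) x) g l (Icc s t)) :
    f t - f s = ∫ x in s..t, g x := by
  have hcont := eventually_continuousOn_slope_sub_left hf has hc
  rw [← uIcc_of_le hst] at hcont hg
  have hlim := hg.tendsto_intervalIntegral_of_continuousOn (μ := volume) hcont
  have hwindows : Tendsto (fun i => (c i)⁻¹ • (∫ x in t - c i..t, f x)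
      - (c i)⁻¹ • ∫ x in s - c i..s, f x) l (𝓝 (f t - f s)) :=
    (tendsto_inv_smul_integral_left hf (has.trans_le hst) hc).sub
      (tendsto_inv_smul_integral_left (hf.mono (Icc_subset_Icc_right hst)) has hc)
  refine tendsto_nhds_unique (hwindows.congr' ?_) hlim
  filter_upwards [hc.eventually (Ioo_mem_nhdsGT (sub_pos.2 has))] with i hi
  have hfi : IntegrableOn f (Icc (s - c i) t) :=
    (hf.mono (Icc_subset_Icc_left (by linarith [hi.2]))).integrableOn_Icc
  simp only [slope_sub_left]
  rw [intervalIntegral.integral_smul, integral_sub_comp_sub_right hfi hi.1.le hst, smul_sub]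

theorem continuousOn_Icc_of_forall_continuousOn_Icc {Y : Type*} [TopologicalSpace Y]
    {g : ℝ → Y} (h : ∀ s ∈ Ioo a b, ContinuousOn g (Icc s b))
    (ha : Tendsto g (𝓝[Ioc a b] a) (𝓝 (g a))) : ContinuousOn g (Icc a b) := by
  intro t ht
  rcases ht.1.eq_or_lt with rfl | hat
  · rw [ContinuousWithinAt, ← Ioc_insert_left ht.2, nhdsWithin_insert]
    exact (tendsto_pure_nhds g a).sup ha
  · have hmid : (a + t) / 2 ∈ Ioo a b := ⟨by linarith, by linarith [ht.2]⟩
    refine (h _ hmid t ⟨by linarith, ht.2⟩).mono_of_mem_nhdsWithin ?_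
    have hmid_lt : (a + t) / 2 < t := by linarith
    exact mem_of_superset (inter_mem_nhdsWithin _ (Ioi_mem_nhds hmid_lt))
      fun u hu => ⟨hu.2.le, hu.1.2⟩

theorem hasDerivWithinAt_of_sub_eq_integral [CompleteSpace E] (hab : a < b)
    (hf : ContinuousOn f (Icc a b)) (hg : ContinuousOn g (Icc a b))
    (hfg : ∀ s ∈ Ioc a b, f b - f s = ∫ x in s..b, g x) (ht : t ∈ Icc a b) :
    HasDerivWithinAt f (g t) (Icc a b) t := by
  set G : ℝ → E := fun u => ∫ x in a..u, g x
  have hGcont : ContinuousOn G (Icc a b) := fun u hu =>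
    (hg.hasDerivWithinAt_intervalIntegral hu).continuousWithinAt
  have hfG : EqOn f (fun u => G u + (f b - G b)) (Icc a b) := by
    refine EqOn.of_subset_closure (s := Ioc a b) ?_ hf (hGcont.add continuousOn_const)
      Ioc_subset_Icc_self (closure_Ioc hab.ne).ge
    intro u hu
    have hII {v : ℝ} (hv : v ∈ Icc a b) : IntervalIntegrable g volume a v :=
      (hg.mono (uIcc_subset_Icc (left_mem_Icc.2 hab.le) hv)).intervalIntegrable
    have hdiff : f b - f u = G b - G u := (hfg u hu).trans <|
      (integral_interval_sub_left (hII (right_mem_Icc.2 hab.le))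
        (hII (Ioc_subset_Icc_self hu))).symm
    exact eq_add_of_sub_eq' (sub_eq_sub_iff_sub_eq_sub.1 hdiff).symm
  exact ((hg.hasDerivWithinAt_intervalIntegral ht).add_const (f b - G b)).congr hfG (hfG ht)

end

/-- If `f : [0,1] → X` is continuous, the discrete left difference quotients converge
uniformly on `(0,1]` to `g`, and `g t → g 0` as `t ↘ 0`, then `f` is continuously
differentiable on `[0,1]` with derivative `g`. -/
theorem stmt2
    {X : Type*} [NormedAddCommGroup X] [NormedSpace ℝ X] [CompleteSpace X]
    (f : ℝ → X) (g : ℝ → X)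
    (hf : ContinuousOn f (Set.Icc 0 1))
    (hconv : ∀ ε > (0:ℝ), ∃ K : ℕ, ∀ k ≥ K, ∀ t ∈ Set.Icc ((k:ℝ)⁻¹) 1,
      ‖(k:ℝ) • (f t - f (t - (k:ℝ)⁻¹)) - g t‖ ≤ ε)
    (hg0 : Filter.Tendsto g (nhdsWithin 0 (Set.Ioc 0 1)) (nhds (g 0))) :
    (∀ t ∈ Set.Icc (0:ℝ) 1, HasDerivWithinAt f (g t) (Set.Icc 0 1) t) ∧
      ContinuousOn g (Set.Icc 0 1) := by
  have hk : Tendsto (fun k : ℕ => (k : ℝ)⁻¹) atTop (𝓝[>] 0) :=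
    tendsto_inv_atTop_nhdsGT_zero.comp tendsto_natCast_atTop_atTop
  have hunif : ∀ s > 0,
      TendstoUniformlyOn (fun (k : ℕ) x => slope f (x - (k : ℝ)⁻¹) x) g atTop (Icc s 1) := by
    intro s hs
    rw [Metric.tendstoUniformlyOn_iff]
    intro ε hε
    obtain ⟨K, hK⟩ := hconv (ε / 2) (half_pos hε)
    filter_upwards [eventually_ge_atTop K, hk.eventually (Ioc_mem_nhdsGT hs)] with k hkK hks x hx
    rw [dist_comm, dist_eq_norm, slope_sub_left, inv_inv]
    exact (hK k hkK x ⟨hks.2.trans hx.1, hx.2⟩).trans_lt (half_lt_self hε)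
  have hgc : ContinuousOn g (Icc 0 1) := continuousOn_Icc_of_forall_continuousOn_Icc
    (fun s hs => (hunif s hs.1).continuousOn
      (eventually_continuousOn_slope_sub_left hf hs.1 hk).frequently) hg0
  exact ⟨fun t ht => hasDerivWithinAt_of_sub_eq_integral zero_lt_one hf hgc
    (fun s hs => sub_eq_integral_of_tendstoUniformlyOn_slope hf hs.1 hs.2 hk (hunif s hs.1)) ht,
    hgc⟩
end

section
/- If f : [0,1] → X is continuous and k·(f(t) − f(t−1/k)) → 0 uniformly in t ∈ (0,1] as k → ∞, then f is constant on [0,1]. -/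
/-- If `f : [0,1] → X` is continuous and `k • (f t - f (t - 1/k)) → 0` uniformly on
`(0,1]`, then `f` is constant on `[0,1]`. -/
theorem stmt3
    {X : Type*} [NormedAddCommGroup X] [NormedSpace ℝ X] [CompleteSpace X]
    (f : ℝ → X)
    (hf : ContinuousOn f (Set.Icc 0 1))
    (hconv : ∀ ε > (0:ℝ), ∃ K : ℕ, ∀ k ≥ K, ∀ t ∈ Set.Icc ((k:ℝ)⁻¹) 1,
      ‖(k:ℝ) • (f t - f (t - (k:ℝ)⁻¹))‖ ≤ ε) :
    ∀ s ∈ Set.Icc (0:ℝ) 1, ∀ t ∈ Set.Icc (0:ℝ) 1, f s = f t := by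
  have key : ∀ s ∈ Set.Icc (0:ℝ) 1, ∀ t ∈ Set.Icc (0:ℝ) 1, s ≤ t → f s = f t := by
    intro s hs t ht hst
    have hnorm : ∀ ε > (0:ℝ), ‖f t - f s‖ ≤ ε := by
      intro ε hε
      have hε2 : (0:ℝ) < ε / 2 := by linarith
      -- continuity at s
      have hcs : ContinuousWithinAt f (Set.Icc 0 1) s := hf s hs
      rw [Metric.continuousWithinAt_iff] at hcs
      obtain ⟨δ, hδ, hδ'⟩ := hcs (ε/2) hε2
      obtain ⟨K, hK⟩ := hconv (ε/2) hε2
      set k : ℕ := K + ⌈δ⁻¹⌉₊ + 1 with hk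
      have hkK : k ≥ K := by omega
      have hk1 : (1:ℝ) ≤ (k:ℝ) := by
        have : 1 ≤ k := by omega
        exact_mod_cast this
      have hkpos : (0:ℝ) < (k:ℝ) := by linarith
      have hkinv_pos : (0:ℝ) < (k:ℝ)⁻¹ := by positivity
      have hkδ : (k:ℝ)⁻¹ < δ := by
        have h1 : δ⁻¹ < (k:ℝ) := by
          have : (⌈δ⁻¹⌉₊ : ℝ) ≥ δ⁻¹ := Nat.le_ceil _
          have h2 : (k:ℝ) ≥ (⌈δ⁻¹⌉₊ : ℝ) + 1 := by
            have : ⌈δ⁻¹⌉₊ + 1 ≤ k := by omega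
            exact_mod_cast this
          linarith
        calc (k:ℝ)⁻¹ < (δ⁻¹)⁻¹ := by
              apply inv_strictAnti₀ (by positivity) h1
          _ = δ := inv_inv δ
      have step : ∀ u ∈ Set.Icc ((k:ℝ)⁻¹) 1, ‖f u - f (u - (k:ℝ)⁻¹)‖ ≤ (ε/2) / k := by
        intro u hu
        have := hK k hkK u hu
        rw [norm_smul, Real.norm_eq_abs, abs_of_pos hkpos] at this
        rw [le_div_iff₀ hkpos]
        linarith [this]
      have tele : ∀ j : ℕ, (j:ℝ) * (k:ℝ)⁻¹ ≤ t - s →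
          ‖f t - f (t - (j:ℝ) * (k:ℝ)⁻¹)‖ ≤ (j:ℝ) * ((ε/2) / k) := by
        intro j
        induction j with
        | zero => intro _; simp
        | succ j ih =>
          intro hj
          have hjr : ((j:ℝ)+1) * (k:ℝ)⁻¹ ≤ t - s := by
            rw [Nat.cast_add, Nat.cast_one] at hj; linarith
          have hj' : (j:ℝ) * (k:ℝ)⁻¹ ≤ t - s := by nlinarith
          have ihh := ih hj'
          have hu : t - (j:ℝ) * (k:ℝ)⁻¹ ∈ Set.Icc ((k:ℝ)⁻¹) 1 := by
            constructor
            · have : (0:ℝ) ≤ s := hs.1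
              nlinarith
            · have : t ≤ 1 := ht.2
              nlinarith
          have hstep := step _ hu
          have heq : t - ((j:ℝ)+1) * (k:ℝ)⁻¹ = (t - (j:ℝ) * (k:ℝ)⁻¹) - (k:ℝ)⁻¹ := by ring
          have : ‖f t - f (t - ((j:ℝ)+1) * (k:ℝ)⁻¹)‖ ≤
              ‖f t - f (t - (j:ℝ) * (k:ℝ)⁻¹)‖ +
              ‖f (t - (j:ℝ) * (k:ℝ)⁻¹) - f ((t - (j:ℝ) * (k:ℝ)⁻¹) - (k:ℝ)⁻¹)‖ := by
            rw [heq]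
            exact norm_sub_le_norm_sub_add_norm_sub _ _ _
          rw [Nat.cast_add, Nat.cast_one]
          calc ‖f t - f (t - ((j:ℝ)+1) * (k:ℝ)⁻¹)‖
              ≤ ‖f t - f (t - (j:ℝ) * (k:ℝ)⁻¹)‖ +
                ‖f (t - (j:ℝ) * (k:ℝ)⁻¹) - f ((t - (j:ℝ) * (k:ℝ)⁻¹) - (k:ℝ)⁻¹)‖ := this
            _ ≤ (j:ℝ) * ((ε/2) / k) + (ε/2) / k := add_le_add ihh hstep
            _ = ((j:ℝ)+1) * ((ε/2) / k) := by ring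
      set j₀ : ℕ := ⌊(t - s) * k⌋₊ with hj₀
      have hts : (0:ℝ) ≤ t - s := by linarith
      have hfl : (j₀:ℝ) ≤ (t - s) * k := Nat.floor_le (by positivity)
      have hfl' : (t - s) * k < (j₀:ℝ) + 1 := Nat.lt_floor_add_one _
      have hjle : (j₀:ℝ) * (k:ℝ)⁻¹ ≤ t - s := by
        rw [mul_inv_le_iff₀ hkpos]; linarith
      have htel := tele j₀ hjle
      -- the point t - j₀/k is δ-close to s and in Icc 0 1
      have hu0 : t - (j₀:ℝ) * (k:ℝ)⁻¹ ∈ Set.Icc (0:ℝ) 1 := by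
        constructor
        · have : (0:ℝ) ≤ s := hs.1; linarith
        · have : t ≤ 1 := ht.2; nlinarith
      have hclose : dist (t - (j₀:ℝ) * (k:ℝ)⁻¹) s < δ := by
        rw [Real.dist_eq, abs_lt]
        constructor
        · linarith
        · have h1 : t - s < ((j₀:ℝ) + 1) * (k:ℝ)⁻¹ := by
            rw [← lt_div_iff₀ hkpos] at hfl'
            rw [div_eq_mul_inv] at hfl'
            linarith
          nlinarith
      have hcont := hδ' hu0 hclose
      rw [dist_eq_norm] at hcont
      have hj₀k : (j₀:ℝ) ≤ k := by
        have : (t - s) * k ≤ k := by nlinarith [ht.2, hs.1]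
        linarith
      have hbound : (j₀:ℝ) * ((ε/2) / k) ≤ ε/2 := by
        rw [div_eq_mul_inv]
        have : (j₀:ℝ) * (ε/2 * (k:ℝ)⁻¹) = (j₀:ℝ) * (k:ℝ)⁻¹ * (ε/2) := by ring
        rw [this]
        have h2 : (j₀:ℝ) * (k:ℝ)⁻¹ ≤ 1 := by
          rw [mul_inv_le_iff₀ hkpos]; linarith
        nlinarith
      calc ‖f t - f s‖ ≤ ‖f t - f (t - (j₀:ℝ) * (k:ℝ)⁻¹)‖ +
            ‖f (t - (j₀:ℝ) * (k:ℝ)⁻¹) - f s‖ := norm_sub_le_norm_sub_add_norm_sub _ _ _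
        _ ≤ ε/2 + ε/2 := add_le_add (le_trans htel hbound) (le_of_lt hcont)
        _ = ε := by ring
    have : ‖f t - f s‖ ≤ 0 := le_of_forall_pos_le_add (by intro ε hε; simpa using hnorm ε hε)
    have := le_antisymm this (norm_nonneg _)
    rw [norm_sub_eq_zero_iff] at this
    exact this.symm
  intro s hs t ht
  rcases le_total s t with h|h
  · exact key s hs t ht h
  · exact (key t ht s hs h).symm
end

section
/- Suppose A(t) : D ⊂ X → X, t ∈ [0,1], are closed linear operators with common dense domain D such that 1 − A(t) is boundedly invertible for each t, and suppose that for each x ∈ D the map t ↦ A(t)x is continuously differentiable. Then B(t,s) := (1 − A(t))(1 − A(s))⁻¹ is uniformly bounded in operator norm on [0,1] × [0,1]. -/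
/-!
Put `S t = (1 - A t) R 0`. By the closed graph theorem each `S t` is bounded; it is invertible
with inverse `(1 - A 0) R t`, and `B(t,s) = S t (S s)⁻¹`. For fixed `x`, the map
`t ↦ S t x = R 0 x - A t (R 0 x)` is C¹, hence Lipschitz, so by Banach–Steinhaus `t ↦ S t` is
Lipschitz in operator norm. Inversion is continuous on the units of `L(X)`, so `(t,s) ↦ B(t,s)`
is norm-continuous on the compact square `[0,1]²`, hence bounded.
-/

open Set

section ClosedComp

variable {𝕜 E F G : Type*} [NontriviallyNormedField 𝕜]
  [NormedAddCommGroup E] [NormedSpace 𝕜 E]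
  [NormedAddCommGroup F] [NormedSpace 𝕜 F] [NormedAddCommGroup G] [NormedSpace 𝕜 G]
  {D : Submodule 𝕜 E}

theorem isClosed_graph_comp_codRestrict {A : D →ₗ[𝕜] F}
    (hA : IsClosed {p : E × F | ∃ h : p.1 ∈ D, A ⟨p.1, h⟩ = p.2})
    (R : G →L[𝕜] E) (hR : ∀ x, R x ∈ D) :
    IsClosed ((A ∘ₗ (R : G →ₗ[𝕜] E).codRestrict D hR).graph : Set (G × F)) := by
  have hgraph : ((A ∘ₗ (R : G →ₗ[𝕜] E).codRestrict D hR).graph : Set (G × F)) =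
      (fun q : G × F => (R q.1, q.2)) ⁻¹' {p : E × F | ∃ h : p.1 ∈ D, A ⟨p.1, h⟩ = p.2} := by
    ext ⟨x, y⟩
    exact ⟨fun h => ⟨hR x, h.symm⟩, fun ⟨_, h⟩ => h.symm⟩
  rw [hgraph]
  exact hA.preimage ((R.continuous.comp continuous_fst).prodMk continuous_snd)

def closedComp [CompleteSpace F] [CompleteSpace G] {A : D →ₗ[𝕜] F}
    (hA : IsClosed {p : E × F | ∃ h : p.1 ∈ D, A ⟨p.1, h⟩ = p.2})
    (R : G →L[𝕜] E) (hR : ∀ x, R x ∈ D) : G →L[𝕜] F :=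
  .ofIsClosedGraph (isClosed_graph_comp_codRestrict hA R hR)

@[simp]
theorem closedComp_apply [CompleteSpace F] [CompleteSpace G] {A : D →ₗ[𝕜] F}
    (hA : IsClosed {p : E × F | ∃ h : p.1 ∈ D, A ⟨p.1, h⟩ = p.2})
    (R : G →L[𝕜] E) (hR : ∀ x, R x ∈ D) (x : G) :
    closedComp hA R hR x = A ⟨R x, hR x⟩ := rfl

end ClosedComp

/-! In this section `R - closedComp hA R hR` is the operator `(1 - A) R`. -/

section OneSubClosedComp

variable {𝕜 X : Type*} [NontriviallyNormedField 𝕜]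
  [NormedAddCommGroup X] [NormedSpace 𝕜 X] [CompleteSpace X] {D : Submodule 𝕜 X}
  {A A' : D →ₗ[𝕜] X} {R R' : X →L[𝕜] X}

theorem sub_closedComp_mul_sub_closedComp
    (hA : IsClosed {p : X × X | ∃ h : p.1 ∈ D, A ⟨p.1, h⟩ = p.2})
    (hA' : IsClosed {p : X × X | ∃ h : p.1 ∈ D, A' ⟨p.1, h⟩ = p.2})
    (hR : ∀ x, R x ∈ D) (hR' : ∀ x, R' x ∈ D) (hR'A' : ∀ y : D, R' ((y : X) - A' y) = y) :
    (R' - closedComp hA R' hR') * (R - closedComp hA' R hR) = R - closedComp hA R hR := by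
  ext x
  have hx : R' (R x - A' ⟨R x, hR x⟩) = R x := hR'A' ⟨R x, hR x⟩
  have hD : (⟨R' (R x - A' ⟨R x, hR x⟩), hR' _⟩ : D) = ⟨R x, hR x⟩ := Subtype.ext hx
  change R' (R x - A' ⟨R x, hR x⟩) - A ⟨R' (R x - A' ⟨R x, hR x⟩), hR' _⟩ = R x - A ⟨R x, hR x⟩
  rw [hD, hx]

theorem sub_closedComp_eq_one (hA : IsClosed {p : X × X | ∃ h : p.1 ∈ D, A ⟨p.1, h⟩ = p.2})
    (hR : ∀ x, R x ∈ D) (hRA : ∀ x, R x - A ⟨R x, hR x⟩ = x) :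
    R - closedComp hA R hR = 1 := by
  ext x
  exact hRA x

end OneSubClosedComp

theorem exists_lipschitzOnWith_of_hasDerivWithinAt {E : Type*} [NormedAddCommGroup E]
    [NormedSpace ℝ E] {f f' : ℝ → E} {s : Set ℝ} (hs : IsCompact s) (hconv : Convex ℝ s)
    (hf : ∀ t ∈ s, HasDerivWithinAt f (f' t) s t) (hf' : ContinuousOn f' s) :
    ∃ K, LipschitzOnWith K f s := by
  obtain ⟨C, hC⟩ := hs.bddAbove_image (continuous_nnnorm.comp_continuousOn hf')
  exact ⟨C, hconv.lipschitzOnWith_of_nnnorm_hasDerivWithin_le hf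
    fun t ht => hC (mem_image_of_mem _ ht)⟩

/-- Banach–Steinhaus applied to the difference quotients. -/
theorem ContinuousLinearMap.exists_lipschitzOnWith_of_apply {α E F : Type*} [MetricSpace α]
    [NormedAddCommGroup E] [NormedSpace ℝ E] [CompleteSpace E]
    [NormedAddCommGroup F] [NormedSpace ℝ F] {S : α → E →L[ℝ] F} {s : Set α}
    (h : ∀ x, ∃ K, LipschitzOnWith K (fun a => S a x) s) : ∃ K, LipschitzOnWith K S s := by
  let Q : s × s → E →L[ℝ] F := fun p => (dist (p.1 : α) p.2)⁻¹ • (S p.1 - S p.2)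
  obtain ⟨C, hC⟩ : ∃ C, ∀ p, ‖Q p‖ ≤ C := by
    refine banach_steinhaus fun x => ?_
    obtain ⟨K, hK⟩ := h x
    refine ⟨K, fun ⟨⟨a, ha⟩, ⟨b, hb⟩⟩ => ?_⟩
    have hab := hK.dist_le_mul a ha b hb
    simp only [Q, smul_apply, sub_apply, norm_smul, norm_inv, Real.norm_eq_abs, abs_dist,
      ← dist_eq_norm]
    rcases (dist_nonneg : 0 ≤ dist a b).eq_or_lt with hd | hd
    · simp [← hd]
    · rwa [inv_mul_le_iff₀ hd, mul_comm]
  refine ⟨_, LipschitzOnWith.of_dist_le' (K := C) fun a ha b hb => ?_⟩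
  rcases eq_or_ne a b with rfl | hab
  · simp
  have hd : 0 < dist a b := dist_pos.2 hab
  have hQ := hC (⟨a, ha⟩, ⟨b, hb⟩)
  simp only [Q, norm_smul, norm_inv, Real.norm_eq_abs, abs_dist] at hQ
  rwa [inv_mul_le_iff₀ hd, mul_comm, ← dist_eq_norm] at hQ

theorem ContinuousOn.ringInverse {α R : Type*} [TopologicalSpace α] [NormedRing R]
    [HasSummableGeomSeries R] {f : α → R} {s : Set α} (hf : ContinuousOn f s)
    (hu : ∀ a ∈ s, IsUnit (f a)) : ContinuousOn (fun a => Ring.inverse (f a)) s := fun a ha => by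
  obtain ⟨u, hu⟩ := hu a ha
  exact (hu ▸ NormedRing.inverse_continuousAt u).comp_continuousWithinAt (hf a ha)

theorem stmt10_general
    {X : Type*} [NormedAddCommGroup X] [NormedSpace ℝ X] [CompleteSpace X]
    (D : Submodule ℝ X)
    (A : ℝ → D →ₗ[ℝ] X)
    (hclosed : ∀ t, IsClosed {p : X × X | ∃ h : p.1 ∈ D, A t ⟨p.1, h⟩ = p.2})
    (R : ℝ → X →L[ℝ] X) (hmem : ∀ s x, R s x ∈ D)
    (hR1 : ∀ s x, (R s x : X) - A s ⟨R s x, hmem s x⟩ = x)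
    (hR2 : ∀ s (y : D), R s ((y : X) - A s y) = y)
    (hC1 : ∀ y : D, ∃ A' : ℝ → X,
      (∀ t ∈ Set.Icc (0:ℝ) 1, HasDerivWithinAt (fun t => A t y) (A' t) (Set.Icc 0 1) t) ∧
      ContinuousOn A' (Set.Icc (0:ℝ) 1)) :
    ∃ M : ℝ, ∀ t ∈ Set.Icc (0:ℝ) 1, ∀ s ∈ Set.Icc (0:ℝ) 1, ∀ x : X,
      ‖(R s x : X) - A t ⟨R s x, hmem s x⟩‖ ≤ M * ‖x‖ := by
  set S : ℝ → X →L[ℝ] X := fun t => R 0 - closedComp (hclosed t) (R 0) (hmem 0)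
  set T : ℝ → X →L[ℝ] X := fun s => R s - closedComp (hclosed 0) (R s) (hmem s)
  have hB : ∀ t s, S t * T s = R s - closedComp (hclosed t) (R s) (hmem s) := fun t s =>
    sub_closedComp_mul_sub_closedComp _ _ _ _ (hR2 0)
  have hST : ∀ s, S s * T s = 1 := fun s =>
    (hB s s).trans (sub_closedComp_eq_one _ _ (hR1 s))
  have hTS : ∀ s, T s * S s = 1 := fun s =>
    (sub_closedComp_mul_sub_closedComp _ _ _ _ (hR2 s)).trans (sub_closedComp_eq_one _ _ (hR1 0))
  obtain ⟨K, hK⟩ : ∃ K, LipschitzOnWith K S (Icc 0 1) := by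
    refine ContinuousLinearMap.exists_lipschitzOnWith_of_apply fun x => ?_
    obtain ⟨A', hA', hA'c⟩ := hC1 ⟨R 0 x, hmem 0 x⟩
    exact exists_lipschitzOnWith_of_hasDerivWithinAt isCompact_Icc (convex_Icc 0 1)
      (fun t ht => (hA' t ht).const_sub (R 0 x)) hA'c.neg
  have hTc : ContinuousOn T (Icc 0 1) :=
    (hK.continuousOn.ringInverse fun s _ => ⟨⟨S s, T s, hST s, hTS s⟩, rfl⟩).congr fun s _ =>
      (Ring.inverse_unit ⟨S s, T s, hST s, hTS s⟩).symm
  obtain ⟨M, hM⟩ := (isCompact_Icc.prod isCompact_Icc).exists_bound_of_continuousOn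
    ((hK.continuousOn.comp continuousOn_fst fun p hp => hp.1).mul
      (hTc.comp continuousOn_snd fun p hp => hp.2))
  refine ⟨M, fun t ht s hs x => ?_⟩
  calc ‖R s x - A t ⟨R s x, hmem s x⟩‖ = ‖(S t * T s) x‖ := by rw [hB]; rfl
    _ ≤ M * ‖x‖ := (S t * T s).le_of_opNorm_le (hM (t, s) ⟨ht, hs⟩) x

/-- Kato's condition (i): if `A t : D → X` are closed operators with common dense domain,
`1 - A t` has bounded inverse `R t`, and `t ↦ A t x` is C¹ for each `x ∈ D`, then
`B(t,s) = (1 - A t)(1 - A s)⁻¹` is uniformly bounded on `[0,1]²`. -/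
theorem stmt10
    {X : Type*} [NormedAddCommGroup X] [NormedSpace ℝ X] [CompleteSpace X]
    (D : Submodule ℝ X) (hD : Dense (D : Set X))
    (A : ℝ → D →ₗ[ℝ] X)
    (hclosed : ∀ t, IsClosed {p : X × X | ∃ h : p.1 ∈ D, A t ⟨p.1, h⟩ = p.2})
    (R : ℝ → X →L[ℝ] X) (hmem : ∀ s x, R s x ∈ D)
    (hR1 : ∀ s x, (R s x : X) - A s ⟨R s x, hmem s x⟩ = x)
    (hR2 : ∀ s (y : D), R s ((y : X) - A s y) = y)
    (hC1 : ∀ y : D, ∃ A' : ℝ → X,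
      (∀ t ∈ Set.Icc (0:ℝ) 1, HasDerivWithinAt (fun t => A t y) (A' t) (Set.Icc 0 1) t) ∧
      ContinuousOn A' (Set.Icc (0:ℝ) 1)) :
    ∃ M : ℝ, ∀ t ∈ Set.Icc (0:ℝ) 1, ∀ s ∈ Set.Icc (0:ℝ) 1, ∀ x : X,
      ‖(R s x : X) - A t ⟨R s x, hmem s x⟩‖ ≤ M * ‖x‖ :=
  stmt10_general D A hclosed R hmem hR1 hR2 hC1
end

section
/- Let A(t) : D ⊂ X → X be closed operators with common dense domain and bounded inverses, with t ↦ A(t)x continuously differentiable for each x ∈ D. Then for every x ∈ X the limit C(t)x := lim_{k→∞} k·(A(t)A(t−1/k)⁻¹ − 1)x exists uniformly in t ∈ (0,1] and equals Ȧ(t)A(t)⁻¹x, and t ↦ C(t)x is continuous. -/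
/-!
Fix a < b and put S t = A t A(a)⁻¹ and T t = A a A(t)⁻¹. By the closed graph theorem both are
bounded, and T t = (S t)⁻¹. The difference quotients of S converge strongly to
G t = Ȧ t A(a)⁻¹, so each G t is bounded and, by Banach–Steinhaus, uniformly so on [a, b];
hence S is Lipschitz in operator norm and its inverse T is norm continuous. Consequently
Ȧ τ A(σ)⁻¹ x = G τ (T σ x) is jointly continuous in (σ, τ). Since A s A(s)⁻¹ x = x, the quotient
k (A t A(t - 1/k)⁻¹ x - x) is a difference quotient of τ ↦ A τ A(t - 1/k)⁻¹ x, and the mean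
value inequality together with uniform continuity on the compact square gives uniform convergence.
-/

open Set Filter Topology NNReal

section ClosedGraph

variable {𝕜 E F G : Type*} [NontriviallyNormedField 𝕜]
  [NormedAddCommGroup E] [NormedSpace 𝕜 E]
  [NormedAddCommGroup F] [NormedSpace 𝕜 F] [CompleteSpace F]
  [NormedAddCommGroup G] [NormedSpace 𝕜 G] [CompleteSpace G]
  {D : Submodule 𝕜 E}

def LinearMap.compOfIsClosedGraph (A : D →ₗ[𝕜] F)
    (hA : IsClosed {p : E × F | ∃ h : p.1 ∈ D, A ⟨p.1, h⟩ = p.2})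
    (R : G →L[𝕜] E) (hR : ∀ z, R z ∈ D) : G →L[𝕜] F where
  toLinearMap := A.comp (LinearMap.codRestrict D R.toLinearMap hR)
  cont := by
    refine LinearMap.continuous_of_isClosed_graph _ ?_
    convert hA.preimage ((R.continuous.comp continuous_fst).prodMk continuous_snd) using 1
    ext ⟨z, y⟩
    exact ⟨fun h => ⟨hR z, h.symm⟩, fun ⟨_, h⟩ => h.symm⟩

@[simp]
theorem LinearMap.compOfIsClosedGraph_apply (A : D →ₗ[𝕜] F)
    (hA : IsClosed {p : E × F | ∃ h : p.1 ∈ D, A ⟨p.1, h⟩ = p.2})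
    (R : G →L[𝕜] E) (hR : ∀ z, R z ∈ D) (z : G) :
    A.compOfIsClosedGraph hA R hR z = A ⟨R z, hR z⟩ :=
  rfl

end ClosedGraph

section OperatorFamilies

variable {E F : Type*} [NormedAddCommGroup E] [NormedSpace ℝ E]
  [NormedAddCommGroup F] [NormedSpace ℝ F]

theorem exists_clm_eq_of_hasDerivWithinAt [CompleteSpace E] {S : ℝ → E →L[ℝ] F}
    {g : ℝ → E → F} {s : Set ℝ} (hs : UniqueDiffOn ℝ s)
    (hS : ∀ z, ∀ t ∈ s, HasDerivWithinAt (fun τ => S τ z) (g t z) s t) :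
    ∃ G : ℝ → E →L[ℝ] F, ∀ t ∈ s, ⇑(G t) = g t := by
  have (t : ℝ) (ht : t ∈ s) : ∃ L : E →L[ℝ] F, ⇑L = g t := by
    have : (𝓝[s \ {t}] t).NeBot :=
      accPt_principal_iff_nhdsWithin.mp (uniqueDiffWithinAt_iff_accPt.mp (hs t ht))
    refine ⟨continuousLinearMapOfTendsto (l := 𝓝[s \ {t}] t) (fun τ => (τ - t)⁻¹ • (S τ - S t))
      (f := g t) (tendsto_pi_nhds.mpr fun z => ?_), rfl⟩
    exact hasDerivWithinAt_iff_tendsto_slope.mp (hS z t ht)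
  choose! G hG using this
  exact ⟨G, hG⟩

theorem IsCompact.exists_bound_of_continuousOn_apply [CompleteSpace E] {G : ℝ → E →L[ℝ] F}
    {s : Set ℝ} (hs : IsCompact s) (hG : ∀ z, ContinuousOn (fun t => G t z) s) :
    ∃ M : ℝ≥0, ∀ t ∈ s, ‖G t‖ ≤ M := by
  obtain ⟨C, hC⟩ := banach_steinhaus (g := fun t : s => G t) fun z => by
    obtain ⟨C, hC⟩ := hs.bddAbove_image (hG z).norm
    exact ⟨C, fun t => hC ⟨t, t.2, rfl⟩⟩
  exact ⟨C.toNNReal, fun t ht => (hC ⟨t, ht⟩).trans (Real.le_coe_toNNReal C)⟩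

theorem lipschitzOnWith_of_hasDerivWithinAt_apply {S G : ℝ → E →L[ℝ] F} {s : Set ℝ}
    {M : ℝ≥0} (hs : Convex ℝ s)
    (hS : ∀ z, ∀ t ∈ s, HasDerivWithinAt (fun τ => S τ z) (G t z) s t)
    (hG : ∀ t ∈ s, ‖G t‖ ≤ M) : LipschitzOnWith M S s := by
  refine LipschitzOnWith.of_dist_le_mul fun a ha b hb => ?_
  rw [dist_eq_norm, dist_eq_norm]
  refine (S a - S b).opNorm_le_bound (by positivity) fun z => ?_
  calc ‖S a z - S b z‖ ≤ M * ‖z‖ * ‖a - b‖ :=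
        hs.norm_image_sub_le_of_norm_hasDerivWithin_le (hS z) (fun τ hτ =>
          ((G τ).le_opNorm z).trans (by gcongr; exact hG τ hτ)) hb ha
    _ = M * ‖a - b‖ * ‖z‖ := by ring

theorem ContinuousOn.clm_apply_of_norm_le {α : Type*} [TopologicalSpace α]
    {G : ℝ → E →L[ℝ] F} {s : Set ℝ} {M : ℝ≥0} (hG : ∀ z, ContinuousOn (fun t => G t z) s)
    (hM : ∀ t ∈ s, ‖G t‖ ≤ M) {u : Set α} {f : α → ℝ} {g : α → E}
    (hf : ContinuousOn f u) (hfs : MapsTo f u s) (hg : ContinuousOn g u) :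
    ContinuousOn (fun a => G (f a) (g a)) u := by
  intro a ha
  have hsmall : Tendsto (fun b => G (f b) (g b - g a)) (𝓝[u] a) (𝓝 0) := by
    refine squeeze_zero_norm' ?_ (by simpa using ((hg a ha).sub_const (g a)).norm.const_mul (M : ℝ))
    filter_upwards [self_mem_nhdsWithin] with b hb
    exact (G (f b)).le_opNorm _ |>.trans (by gcongr; exact hM _ (hfs hb))
  have hfix : ContinuousWithinAt (fun b => G (f b) (g a)) u a :=
    (hG (g a) (f a) (hfs ha)).comp (hf a ha) hfs
  simpa [ContinuousWithinAt] using hsmall.add hfix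

end OperatorFamilies

theorem ContinuousOn.of_mul_eq_one {α R : Type*} [TopologicalSpace α] [NormedRing R]
    [HasSummableGeomSeries R] {S T : α → R} {s : Set α} (hS : ContinuousOn S s)
    (hST : ∀ a ∈ s, S a * T a = 1) (hTS : ∀ a ∈ s, T a * S a = 1) : ContinuousOn T s := by
  intro a ha
  let U (b : α) (hb : b ∈ s) : Rˣ := ⟨S b, T b, hST b hb, hTS b hb⟩
  have hT : EqOn T (fun b => Ring.inverse (S b)) s := fun b hb => by
    change T b = Ring.inverse (U b hb : R)
    rw [Ring.inverse_unit]; rfl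
  refine ContinuousWithinAt.congr ?_ hT (hT ha)
  exact (NormedRing.inverse_continuousAt (U a ha)).comp_continuousWithinAt (f := S) (hS a ha)

theorem exists_pos_forall_norm_sub_sub_smul_le {E : Type*} [NormedAddCommGroup E]
    [NormedSpace ℝ E] {a b : ℝ} {u : ℝ → ℝ → E} {φ : ℝ × ℝ → E}
    (hu : ∀ σ ∈ Icc a b, ∀ τ ∈ Icc a b, HasDerivWithinAt (u σ) (φ (σ, τ)) (Icc a b) τ)
    (hφ : ContinuousOn φ (Icc a b ×ˢ Icc a b)) {ε : ℝ} (hε : 0 < ε) :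
    ∃ δ > 0, ∀ s ∈ Icc a b, ∀ t ∈ Icc a b, s ≤ t → t - s < δ →
      ‖u s t - u s s - (t - s) • φ (t, t)‖ ≤ ε * (t - s) := by
  obtain ⟨δ, hδ, hφδ⟩ := Metric.uniformContinuousOn_iff.mp
    ((isCompact_Icc.prod isCompact_Icc).uniformContinuousOn_of_continuous hφ) ε hε
  refine ⟨δ, hδ, fun s hs t ht hst htsδ => ?_⟩
  have hsub : Icc s t ⊆ Icc a b := Icc_subset_Icc hs.1 ht.2
  have hderiv (τ) (hτ : τ ∈ Icc s t) :
      HasDerivWithinAt (fun τ => u s τ - τ • φ (t, t)) (φ (s, τ) - φ (t, t)) (Icc s t) τ := by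
    refine ((hu s hs τ (hsub hτ)).mono hsub).sub ?_
    simpa using (hasDerivWithinAt_id τ (Icc s t)).smul_const (φ (t, t))
  have hbound (τ) (hτ : τ ∈ Icc s t) : ‖φ (s, τ) - φ (t, t)‖ ≤ ε := by
    rw [← dist_eq_norm]
    refine (hφδ _ ⟨hs, hsub hτ⟩ _ ⟨ht, ht⟩ ?_).le
    rw [Prod.dist_eq, Real.dist_eq, Real.dist_eq, abs_of_nonpos (by linarith),
      abs_of_nonpos (by linarith [hτ.2])]
    exact max_lt (by linarith) (by linarith [hτ.1])
  have := (convex_Icc s t).norm_image_sub_le_of_norm_hasDerivWithin_le hderiv hbound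
    (left_mem_Icc.mpr hst) (right_mem_Icc.mpr hst)
  rwa [Real.norm_of_nonneg (sub_nonneg.mpr hst), sub_sub_sub_comm, ← sub_smul] at this

theorem continuousOn_deriv_apply_resolvent
    {X : Type*} [NormedAddCommGroup X] [NormedSpace ℝ X] [CompleteSpace X]
    {D : Submodule ℝ X} {A : ℝ → D →ₗ[ℝ] X}
    (hclosed : ∀ t, IsClosed {p : X × X | ∃ h : p.1 ∈ D, A t ⟨p.1, h⟩ = p.2})
    {R : ℝ → X →L[ℝ] X} (hmem : ∀ s x, R s x ∈ D)
    (hR1 : ∀ s x, A s ⟨R s x, hmem s x⟩ = x) (hR2 : ∀ s (y : D), R s (A s y) = y)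
    {A' : ℝ → D → X} {a b : ℝ} (hab : a < b)
    (hderiv : ∀ y : D, ∀ t ∈ Icc a b, HasDerivWithinAt (fun t => A t y) (A' t y) (Icc a b) t)
    (hcont : ∀ y : D, ContinuousOn (fun t => A' t y) (Icc a b)) (x : X) :
    ContinuousOn (fun p : ℝ × ℝ => A' p.2 ⟨R p.1 x, hmem p.1 x⟩) (Icc a b ×ˢ Icc a b) := by
  let S t := (A t).compOfIsClosedGraph (hclosed t) (R a) (hmem a)
  let T t := (A a).compOfIsClosedGraph (hclosed a) (R t) (hmem t)
  have hRT (t : ℝ) (z : X) : R a (T t z) = R t z := hR2 a _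
  have hST (t : ℝ) : S t * T t = 1 := by
    ext z
    simp [S, hRT, hR1]
  have hTS (t : ℝ) : T t * S t = 1 := by
    ext z
    simp [T, S, hR2, hR1]
  have hSderiv (z : X) : ∀ t ∈ Icc a b,
      HasDerivWithinAt (fun τ => S τ z) (A' t ⟨R a z, hmem a z⟩) (Icc a b) t :=
    hderiv _
  obtain ⟨G, hG⟩ := exists_clm_eq_of_hasDerivWithinAt (uniqueDiffOn_Icc hab) hSderiv
  have hGcont (z : X) : ContinuousOn (fun t => G t z) (Icc a b) :=
    (hcont _).congr fun t ht => congrFun (hG t ht) z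
  obtain ⟨M, hM⟩ := isCompact_Icc.exists_bound_of_continuousOn_apply hGcont
  have hT : ContinuousOn T (Icc a b) :=
    (lipschitzOnWith_of_hasDerivWithinAt_apply (convex_Icc a b)
      (fun z t ht => hG t ht ▸ hSderiv z t ht) hM).continuousOn.of_mul_eq_one
      (fun t _ => hST t) (fun t _ => hTS t)
  refine (ContinuousOn.clm_apply_of_norm_le hGcont hM continuousOn_snd (fun p hp => hp.2)
    ((hT.comp continuousOn_fst fun p hp => hp.1).clm_apply (continuousOn_const (c := x)))).congr ?_
  rintro ⟨σ, τ⟩ ⟨-, hτ⟩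
  simp [hG τ hτ, hRT]

theorem stmt13_general
    {X : Type*} [NormedAddCommGroup X] [NormedSpace ℝ X] [CompleteSpace X]
    (D : Submodule ℝ X)
    (A : ℝ → D →ₗ[ℝ] X)
    (hclosed : ∀ t, IsClosed {p : X × X | ∃ h : p.1 ∈ D, A t ⟨p.1, h⟩ = p.2})
    (R : ℝ → X →L[ℝ] X) (hmem : ∀ s x, R s x ∈ D)
    (hR1 : ∀ s x, A s ⟨R s x, hmem s x⟩ = x)
    (hR2 : ∀ s (y : D), R s (A s y) = y)
    (A' : ℝ → D → X)
    (hderiv : ∀ y : D, ∀ t ∈ Set.Icc (0:ℝ) 1,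
      HasDerivWithinAt (fun t => A t y) (A' t y) (Set.Icc 0 1) t)
    (hcont : ∀ y : D, ContinuousOn (fun t => A' t y) (Set.Icc (0:ℝ) 1)) :
    ∀ x : X,
      (∀ ε > (0:ℝ), ∃ K : ℕ, ∀ k ≥ K, ∀ t ∈ Set.Icc ((k:ℝ)⁻¹) 1,
        ‖(k:ℝ) • (A t ⟨R (t - (k:ℝ)⁻¹) x, hmem (t - (k:ℝ)⁻¹) x⟩ - x) -
          A' t ⟨R t x, hmem t x⟩‖ ≤ ε) ∧
      ContinuousOn (fun t => A' t ⟨R t x, hmem t x⟩) (Set.Icc (0:ℝ) 1) := by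
  intro x
  have hφ := continuousOn_deriv_apply_resolvent hclosed hmem hR1 hR2 zero_lt_one hderiv hcont x
  refine ⟨fun ε hε => ?_, hφ.comp (continuousOn_id.prodMk continuousOn_id) fun t ht => ⟨ht, ht⟩⟩
  obtain ⟨δ, hδ, hu⟩ := exists_pos_forall_norm_sub_sub_smul_le
    (u := fun σ τ => A τ ⟨R σ x, hmem σ x⟩) (fun σ _ => hderiv _) hφ hε
  obtain ⟨K, hK⟩ := exists_nat_gt δ⁻¹
  refine ⟨K, fun k hk t ht => ?_⟩
  have hKpos : (0 : ℝ) < K := (inv_pos.mpr hδ).trans hK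
  have hkpos : (0 : ℝ) < k := hKpos.trans_le (by exact_mod_cast hk)
  have hkδ : (k : ℝ)⁻¹ < δ := by
    rw [inv_lt_comm₀ hkpos hδ]
    exact hK.trans_le (by exact_mod_cast hk)
  have hstep := hu (t - (k : ℝ)⁻¹) ⟨sub_nonneg.mpr ht.1, by linarith [ht.2, inv_pos.mpr hkpos]⟩
    t ⟨by linarith [ht.1, inv_pos.mpr hkpos], ht.2⟩ (by linarith [inv_pos.mpr hkpos])
    (by simpa using hkδ)
  simp only [hR1, sub_sub_cancel] at hstep
  set y := A t ⟨R (t - (k : ℝ)⁻¹) x, hmem _ x⟩ - x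
  set c := A' t ⟨R t x, hmem t x⟩
  calc ‖(k : ℝ) • y - c‖ = ‖(k : ℝ) • (y - (k : ℝ)⁻¹ • c)‖ := by
        rw [smul_sub (k : ℝ) y, smul_inv_smul₀ hkpos.ne']
    _ = k * ‖y - (k : ℝ)⁻¹ • c‖ := by rw [norm_smul, Real.norm_of_nonneg hkpos.le]
    _ ≤ k * (ε * (k : ℝ)⁻¹) := by gcongr
    _ = ε := by field_simp

/-- Under the C¹-condition, for every `x ∈ X` the limit
`C(t)x = lim_k k • (A t (A (t-1/k))⁻¹ x - x)` exists uniformly in `t ∈ (0,1]`, equals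
`Ȧ t (A t)⁻¹ x`, and `t ↦ C(t)x` is continuous. -/
theorem stmt13
    {X : Type*} [NormedAddCommGroup X] [NormedSpace ℝ X] [CompleteSpace X]
    (D : Submodule ℝ X) (hD : Dense (D : Set X))
    (A : ℝ → D →ₗ[ℝ] X)
    (hclosed : ∀ t, IsClosed {p : X × X | ∃ h : p.1 ∈ D, A t ⟨p.1, h⟩ = p.2})
    (R : ℝ → X →L[ℝ] X) (hmem : ∀ s x, R s x ∈ D)
    (hR1 : ∀ s x, A s ⟨R s x, hmem s x⟩ = x)
    (hR2 : ∀ s (y : D), R s (A s y) = y)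
    (A' : ℝ → D → X)
    (hderiv : ∀ y : D, ∀ t ∈ Set.Icc (0:ℝ) 1,
      HasDerivWithinAt (fun t => A t y) (A' t y) (Set.Icc 0 1) t)
    (hcont : ∀ y : D, ContinuousOn (fun t => A' t y) (Set.Icc (0:ℝ) 1)) :
    ∀ x : X,
      (∀ ε > (0:ℝ), ∃ K : ℕ, ∀ k ≥ K, ∀ t ∈ Set.Icc ((k:ℝ)⁻¹) 1,
        ‖(k:ℝ) • (A t ⟨R (t - (k:ℝ)⁻¹) x, hmem (t - (k:ℝ)⁻¹) x⟩ - x) -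
          A' t ⟨R t x, hmem t x⟩‖ ≤ ε) ∧
      ContinuousOn (fun t => A' t ⟨R t x, hmem t x⟩) (Set.Icc (0:ℝ) 1) :=
  stmt13_general D A hclosed R hmem hR1 hR2 A' hderiv hcont
end

section
/- Let f : [0,1] → X be continuous and suppose for each t ∈ (0,1] the discrete left difference quotients k·(f(t) − f(t−1/k)) converge to g(t) uniformly in t. Then for every 0 < a ≤ b ≤ 1, ‖f(b) − f(a)‖ ≤ (b − a)·sup_{τ ∈ [a,b]} ‖g(τ)‖ (discrete mean value estimate on subintervals). -/
set_option maxHeartbeats 1000000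


/-- Discrete mean value estimate on subintervals: if `f : [0,1] → X` is continuous and
the discrete left difference quotients converge uniformly on `(0,1]` to `g`, then for all
`0 < a ≤ b ≤ 1`, `‖f b - f a‖ ≤ (b - a) * sup_{τ ∈ [a,b]} ‖g τ‖`. -/
theorem stmt19
    {X : Type*} [NormedAddCommGroup X] [NormedSpace ℝ X] [CompleteSpace X]
    (f : ℝ → X) (g : ℝ → X)
    (hf : ContinuousOn f (Set.Icc 0 1))
    (hconv : ∀ ε > (0:ℝ), ∃ K : ℕ, ∀ k ≥ K, ∀ t ∈ Set.Icc ((k:ℝ)⁻¹) 1,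
      ‖(k:ℝ) • (f t - f (t - (k:ℝ)⁻¹)) - g t‖ ≤ ε) :
    ∀ a b : ℝ, 0 < a → a ≤ b → b ≤ 1 →
      ‖f b - f a‖ ≤ (b - a) * ⨆ τ ∈ Set.Icc a b, ‖g τ‖ := by
  intro a b ha hab hb1
  set M : ℝ := ⨆ τ ∈ Set.Icc a b, ‖g τ‖ with hMdef
  have hsub : Set.Icc a b ⊆ Set.Icc (0:ℝ) 1 := fun x hx =>
    ⟨le_trans ha.le hx.1, le_trans hx.2 hb1⟩
  -- bound for f on [0,1]
  obtain ⟨C, hC⟩ := isCompact_Icc.exists_bound_of_continuousOn hf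
  -- crude bound for g on [a,b]
  obtain ⟨K₀, hK₀⟩ := hconv 1 one_pos
  set k₀ : ℕ := max K₀ ⌈a⁻¹⌉₊ with hk₀def
  have hk₀a : ((k₀:ℝ))⁻¹ ≤ a := by
    have h1 : a⁻¹ ≤ (k₀:ℝ) := le_trans (Nat.le_ceil _)
      (by exact_mod_cast le_max_right K₀ ⌈a⁻¹⌉₊)
    have := inv_anti₀ (inv_pos.mpr ha) h1
    rwa [inv_inv] at this
  set B : ℝ := (k₀:ℝ) * (C + C) + 1 with hBdef
  have hgB : ∀ τ ∈ Set.Icc a b, ‖g τ‖ ≤ B := by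
    intro τ hτ
    have hτ' : τ ∈ Set.Icc ((k₀:ℝ))⁻¹ 1 := ⟨le_trans hk₀a hτ.1, le_trans hτ.2 hb1⟩
    have h1 := hK₀ k₀ (le_max_left _ _) τ hτ'
    have htri : ‖g τ‖ - ‖(k₀:ℝ) • (f τ - f (τ - (k₀:ℝ)⁻¹))‖ ≤
        ‖(k₀:ℝ) • (f τ - f (τ - (k₀:ℝ)⁻¹)) - g τ‖ := by
      rw [norm_sub_rev]
      exact norm_sub_norm_le _ _
    have hk₀pos : (0:ℝ) ≤ (k₀:ℝ) := Nat.cast_nonneg _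
    have hmem1 : τ ∈ Set.Icc (0:ℝ) 1 :=
      ⟨le_trans (inv_nonneg.mpr hk₀pos) hτ'.1, hτ'.2⟩
    have hmem2 : τ - (k₀:ℝ)⁻¹ ∈ Set.Icc (0:ℝ) 1 := by
      constructor
      · linarith [hτ'.1]
      · have : (0:ℝ) ≤ (k₀:ℝ)⁻¹ := inv_nonneg.mpr hk₀pos
        linarith [hτ'.2]
    have hsm : ‖(k₀:ℝ) • (f τ - f (τ - (k₀:ℝ)⁻¹))‖ ≤ (k₀:ℝ) * (C + C) := by
      rw [norm_smul, Real.norm_natCast]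
      have : ‖f τ - f (τ - (k₀:ℝ)⁻¹)‖ ≤ C + C :=
        le_trans (norm_sub_le _ _) (add_le_add (hC _ hmem1) (hC _ hmem2))
      exact mul_le_mul_of_nonneg_left this hk₀pos
    linarith
  have hbdd : BddAbove (Set.range fun τ => ⨆ _ : τ ∈ Set.Icc a b, ‖g τ‖) := by
    refine ⟨max B 0, ?_⟩
    rintro x ⟨τ, rfl⟩
    dsimp only
    by_cases h : τ ∈ Set.Icc a b
    · rw [ciSup_pos h]
      exact le_max_of_le_left (hgB τ h)
    · haveI : IsEmpty (τ ∈ Set.Icc a b) := ⟨h⟩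
      rw [Real.iSup_of_isEmpty]
      exact le_max_right _ _
  have hgM : ∀ τ ∈ Set.Icc a b, ‖g τ‖ ≤ M := by
    intro τ hτ
    calc ‖g τ‖ = ⨆ _ : τ ∈ Set.Icc a b, ‖g τ‖ :=
          (ciSup_pos (f := fun _ : τ ∈ Set.Icc a b => ‖g τ‖) hτ).symm
      _ ≤ M := le_ciSup hbdd τ
  have haab : a ∈ Set.Icc a b := ⟨le_refl a, hab⟩
  have hM0 : 0 ≤ M := le_trans (norm_nonneg _) (hgM a haab)
  -- main estimate
  refine le_of_forall_pos_le_add (fun ε hε => ?_)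
  have hε2 : (0:ℝ) < ε / 2 := half_pos hε
  obtain ⟨δ, hδpos, hδ⟩ := Metric.uniformContinuousOn_iff.mp
    (isCompact_Icc.uniformContinuousOn_of_continuous hf) (ε/2) hε2
  obtain ⟨K, hK⟩ := hconv (ε/2) hε2
  set k : ℕ := max (max K ⌈a⁻¹⌉₊) (⌈δ⁻¹⌉₊ + 1) with hkdef
  have hkK : K ≤ k := le_trans (le_max_left _ _) (le_max_left _ _)
  have hkpos : 0 < k := lt_of_lt_of_le (Nat.succ_pos _) (le_max_right _ _)
  have hkposR : (0:ℝ) < (k:ℝ) := by exact_mod_cast hkpos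
  have hka : ((k:ℝ))⁻¹ ≤ a := by
    have h1 : a⁻¹ ≤ (k:ℝ) := le_trans (Nat.le_ceil _)
      (by exact_mod_cast le_trans (le_max_right K ⌈a⁻¹⌉₊) (le_max_left _ _))
    have := inv_anti₀ (inv_pos.mpr ha) h1
    rwa [inv_inv] at this
  have hkδ : ((k:ℝ))⁻¹ < δ := by
    have h1 : δ⁻¹ < (k:ℝ) := by
      have : (⌈δ⁻¹⌉₊ : ℝ) + 1 ≤ (k:ℝ) := by exact_mod_cast le_max_right (max K ⌈a⁻¹⌉₊) (⌈δ⁻¹⌉₊ + 1)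
      linarith [Nat.le_ceil δ⁻¹]
    calc ((k:ℝ))⁻¹ < (δ⁻¹)⁻¹ := by
          apply inv_strictAnti₀ (inv_pos.mpr hδpos) h1
      _ = δ := inv_inv δ
  set n : ℕ := ⌊(k:ℝ) * (b - a)⌋₊ with hndef
  have hn1 : (n:ℝ) ≤ (k:ℝ) * (b - a) := Nat.floor_le (by nlinarith)
  have hn2 : (k:ℝ) * (b - a) < (n:ℝ) + 1 := Nat.lt_floor_add_one _
  -- points a + i/k stay in [a, b]
  have hpt : ∀ i : ℕ, i ≤ n → a + (i:ℝ) / k ∈ Set.Icc a b := by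
    intro i hi
    constructor
    · have : (0:ℝ) ≤ (i:ℝ) / k := div_nonneg (Nat.cast_nonneg _) hkposR.le
      linarith
    · have h1 : (i:ℝ) ≤ (n:ℝ) := by exact_mod_cast hi
      have h2 : (i:ℝ) / k ≤ b - a := by
        rw [div_le_iff₀ hkposR]
        nlinarith
      linarith
  -- per-step bound
  have step : ∀ i : ℕ, i < n →
      ‖f (a + ((i:ℝ) + 1) / k) - f (a + (i:ℝ) / k)‖ ≤ (M + ε/2) / k := by
    intro i hi
    set t : ℝ := a + ((i:ℝ) + 1) / k with htdef
    have hi1 : i + 1 ≤ n := hi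
    have htmem : t ∈ Set.Icc a b := by
      have := hpt (i + 1) hi1
      rwa [Nat.cast_add, Nat.cast_one] at this
    have htmem' : t ∈ Set.Icc ((k:ℝ))⁻¹ 1 := ⟨le_trans hka htmem.1, le_trans htmem.2 hb1⟩
    have hsubk : t - (k:ℝ)⁻¹ = a + (i:ℝ) / k := by
      rw [htdef]
      field_simp
      ring
    have h1 := hK k hkK t htmem'
    rw [hsubk] at h1
    have htri : ‖(k:ℝ) • (f t - f (a + (i:ℝ) / k))‖ - ‖g t‖ ≤
        ‖(k:ℝ) • (f t - f (a + (i:ℝ) / k)) - g t‖ := norm_sub_norm_le _ _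
    have hsm : ‖(k:ℝ) • (f t - f (a + (i:ℝ) / k))‖ = (k:ℝ) * ‖f t - f (a + (i:ℝ) / k)‖ := by
      rw [norm_smul, Real.norm_natCast]
    have hgt : ‖g t‖ ≤ M := hgM t htmem
    rw [le_div_iff₀ hkposR]
    have : (k:ℝ) * ‖f t - f (a + (i:ℝ) / k)‖ ≤ M + ε/2 := by linarith [hsm ▸ htri]
    linarith [this]
  -- telescoping sum
  have tele : f (a + (n:ℝ) / k) - f (a + (0:ℝ) / k) =
      ∑ i ∈ Finset.range n, (f (a + ((i:ℝ) + 1) / k) - f (a + (i:ℝ) / k)) := by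
    have := Finset.sum_range_sub (fun i : ℕ => f (a + (i:ℝ) / k)) n
    simp only [Nat.cast_add, Nat.cast_one, Nat.cast_zero] at this ⊢
    rw [this]
  have hsum : ‖f (a + (n:ℝ) / k) - f a‖ ≤ (b - a) * (M + ε/2) := by
    rw [show f a = f (a + (0:ℝ) / k) by rw [zero_div, add_zero], tele]
    calc ‖∑ i ∈ Finset.range n, (f (a + ((i:ℝ) + 1) / k) - f (a + (i:ℝ) / k))‖
        ≤ ∑ i ∈ Finset.range n, ‖f (a + ((i:ℝ) + 1) / k) - f (a + (i:ℝ) / k)‖ :=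
          norm_sum_le _ _
      _ ≤ ∑ i ∈ Finset.range n, (M + ε/2) / k :=
          Finset.sum_le_sum (fun i hi => step i (Finset.mem_range.mp hi))
      _ = (n:ℝ) * ((M + ε/2) / k) := by
          rw [Finset.sum_const, Finset.card_range, nsmul_eq_mul]
      _ ≤ (b - a) * (M + ε/2) := by
          rw [mul_div_assoc']
          rw [div_le_iff₀ hkposR]
          have hMε : (0:ℝ) ≤ M + ε/2 := by linarith
          nlinarith
  -- remainder by uniform continuity
  have hnb : a + (n:ℝ) / k ∈ Set.Icc a b := hpt n (le_refl n)
  have hbmem : b ∈ Set.Icc (0:ℝ) 1 := ⟨by linarith, hb1⟩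
  have hrem : ‖f b - f (a + (n:ℝ) / k)‖ ≤ ε / 2 := by
    have hdist : dist b (a + (n:ℝ) / k) < δ := by
      rw [Real.dist_eq, abs_of_nonneg]
      · have h3 : b - a < ((n:ℝ) + 1) * (k:ℝ)⁻¹ := by
          rw [← div_eq_mul_inv, lt_div_iff₀ hkposR]
          linarith [hn2]
        have h2 : b - (a + (n:ℝ) / k) < (k:ℝ)⁻¹ := by
          have e : b - (a + (n:ℝ) / k) = (b - a) - (n:ℝ) * (k:ℝ)⁻¹ := by
            rw [div_eq_mul_inv]; ring
          rw [e]
          nlinarith [h3]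
        linarith
      · have := hnb.2
        linarith
    have := hδ b hbmem (a + (n:ℝ) / k) (hsub hnb) hdist
    rw [dist_eq_norm] at this
    linarith
  calc ‖f b - f a‖ ≤ ‖f b - f (a + (n:ℝ) / k)‖ + ‖f (a + (n:ℝ) / k) - f a‖ := by
        have : f b - f a = (f b - f (a + (n:ℝ) / k)) + (f (a + (n:ℝ) / k) - f a) := by abel
        rw [this]; exact norm_add_le _ _
    _ ≤ ε / 2 + (b - a) * (M + ε/2) := add_le_add hrem hsum
    _ = (b - a) * M + ((b - a) * (ε/2) + ε/2) := by ring
    _ ≤ (b - a) * M + ε := by nlinarith [sub_nonneg.mpr hab, hb1, ha]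
end
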